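/- Let 0 < s < s₀, α > 0, C_ω ≥ 0, and suppose a sequence of correlation quantities ρ_n(φ,ψ) (bilinear in φ, ψ) satisfies: |ρ_n(φ,ψ)| ≤ ‖φ‖_{L²}‖ψ‖_{L²} for all φ,ψ, and |ρ_n(φ,ψ)| ≤ C_ω e^{−αn} ‖φ‖_{H^{s₀}}‖ψ‖_{H^{s₀}} for all φ,ψ in H^{s₀}. Then with β = α/(2(s₀/s) − 1), for all φ,ψ ∈ H^s: |ρ_n(φ,ψ)| ≤ (C_ω + 3) e^{−βn} ‖φ‖_{H^s}‖ψ‖_{H^s}. -/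

import Mathlib

/-!
Split `φ = T φ + R φ` into the modes with eigenvalue at most a cutoff `Λ` and the rest, and
likewise `ψ`, so that `ρ(φ, ψ) = ρ(Tφ, Tψ) + ρ(Rφ, Tψ) + ρ(φ, Rψ)`. The first term is controlled by
exponential mixing, since `‖Tφ‖_{H^{s₀}} ≤ Λ^{s₀-s} ‖φ‖_{H^s}`; the other two by the `L²` bound,
since `‖Rφ‖_{L²} ≤ Λ^{-s} ‖φ‖_{H^s}`. The cutoff `Λ = e^{βn/s}` balances the two:
`e^{-αn} Λ^{2(s₀-s)} = Λ^{-s} = e^{-βn}`.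
-/

open Real

/-- `f` lists coefficients in an orthonormal eigenbasis with eigenvalues `l i`. -/
def MemSobolev (l : ℕ → ℝ) (t : ℝ) (f : ℕ → ℝ) : Prop :=
  Summable fun i => f i ^ 2 * l i ^ (2 * t)

noncomputable def sobolevNorm (l : ℕ → ℝ) (t : ℝ) (f : ℕ → ℝ) : ℝ :=
  √(∑' i, f i ^ 2 * l i ^ (2 * t))

noncomputable def lowModes (l : ℕ → ℝ) (Λ : ℝ) (f : ℕ → ℝ) : ℕ → ℝ :=
  {i | l i ≤ Λ}.indicator f

noncomputable def highModes (l : ℕ → ℝ) (Λ : ℝ) (f : ℕ → ℝ) : ℕ → ℝ :=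
  {i | l i ≤ Λ}ᶜ.indicator f

section Sobolev

variable {l : ℕ → ℝ} {f g : ℕ → ℝ} {s t c Λ : ℝ}

theorem sobolevNorm_nonneg : 0 ≤ sobolevNorm l t f :=
  sqrt_nonneg _

theorem memSobolev_zero_iff : MemSobolev l 0 f ↔ Summable fun i => f i ^ 2 := by
  simp [MemSobolev]

theorem sobolevNorm_zero : sobolevNorm l 0 f = √(∑' i, f i ^ 2) := by
  simp [sobolevNorm]

theorem MemSobolev.of_le (hl : ∀ i, 0 ≤ l i) (hf : MemSobolev l s f)
    (h : ∀ i, g i ^ 2 * l i ^ (2 * t) ≤ c * (f i ^ 2 * l i ^ (2 * s))) :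
    MemSobolev l t g :=
  .of_nonneg_of_le (fun i => mul_nonneg (sq_nonneg _) (rpow_nonneg (hl i) _)) h (hf.mul_left c)

theorem sobolevNorm_le_of_le (hl : ∀ i, 0 ≤ l i) (hf : MemSobolev l s f) (hc : 0 ≤ c)
    (h : ∀ i, g i ^ 2 * l i ^ (2 * t) ≤ c ^ 2 * (f i ^ 2 * l i ^ (2 * s))) :
    sobolevNorm l t g ≤ c * sobolevNorm l s f :=
  calc sobolevNorm l t g ≤ √(∑' i, c ^ 2 * (f i ^ 2 * l i ^ (2 * s))) :=
        sqrt_le_sqrt ((hf.of_le hl h).tsum_le_tsum h (hf.mul_left _))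
    _ = c * sobolevNorm l s f := by
        rw [tsum_mul_left, sqrt_mul (sq_nonneg c), sqrt_sq hc, sobolevNorm]

theorem memSobolev_anti (hl : ∀ i, 1 ≤ l i) (hts : t ≤ s) (hf : MemSobolev l s f) :
    MemSobolev l t f :=
  hf.of_le (fun i => zero_le_one.trans (hl i)) (c := 1) fun i => by
    rw [one_mul]
    gcongr
    exact hl i

theorem sobolevNorm_anti (hl : ∀ i, 1 ≤ l i) (hts : t ≤ s) (hf : MemSobolev l s f) :
    sobolevNorm l t f ≤ sobolevNorm l s f := by
  simpa using sobolevNorm_le_of_le (fun i => zero_le_one.trans (hl i)) hf zero_le_one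
    (c := 1) fun i => by
      rw [one_pow, one_mul]
      gcongr
      exact hl i

theorem sq_indicator_mul_rpow_le {S : Set ℕ} {i : ℕ} (hl : 0 < l i)
    (hS : i ∈ S → l i ^ (t - s) ≤ Λ ^ (t - s)) :
    S.indicator f i ^ 2 * l i ^ (2 * t) ≤ (Λ ^ (t - s)) ^ 2 * (f i ^ 2 * l i ^ (2 * s)) := by
  by_cases hi : i ∈ S
  · have hsplit : l i ^ (2 * t) = (l i ^ (t - s)) ^ 2 * l i ^ (2 * s) := by
      rw [← rpow_natCast, ← rpow_mul hl.le, ← rpow_add hl]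
      ring_nf
    rw [Set.indicator_of_mem hi, hsplit, mul_left_comm]
    exact mul_le_mul_of_nonneg_right (pow_le_pow_left₀ (rpow_nonneg hl.le _) (hS hi) 2)
      (mul_nonneg (sq_nonneg _) (rpow_nonneg hl.le _))
  · have := rpow_nonneg hl.le (2 * s)
    rw [Set.indicator_of_notMem hi, zero_pow two_ne_zero, zero_mul]
    positivity

theorem sq_lowModes_mul_rpow_le (hl : ∀ i, 0 < l i) (hst : s ≤ t) (i : ℕ) :
    lowModes l Λ f i ^ 2 * l i ^ (2 * t) ≤ (Λ ^ (t - s)) ^ 2 * (f i ^ 2 * l i ^ (2 * s)) :=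
  sq_indicator_mul_rpow_le (hl i) fun hi => rpow_le_rpow (hl i).le hi (sub_nonneg.2 hst)

theorem sq_highModes_mul_rpow_le (hl : ∀ i, 0 < l i) (hΛ : 0 < Λ) (hts : t ≤ s) (i : ℕ) :
    highModes l Λ f i ^ 2 * l i ^ (2 * t) ≤ (Λ ^ (t - s)) ^ 2 * (f i ^ 2 * l i ^ (2 * s)) :=
  sq_indicator_mul_rpow_le (hl i) fun hi =>
    rpow_le_rpow_of_nonpos hΛ (not_le.1 (by simpa using hi)).le (sub_nonpos.2 hts)

theorem MemSobolev.lowModes (hl : ∀ i, 0 < l i) (hst : s ≤ t) (hf : MemSobolev l s f) :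
    MemSobolev l t (lowModes l Λ f) :=
  hf.of_le (fun i => (hl i).le) (sq_lowModes_mul_rpow_le hl hst)

theorem sobolevNorm_lowModes_le (hl : ∀ i, 0 < l i) (hΛ : 0 < Λ) (hst : s ≤ t)
    (hf : MemSobolev l s f) :
    sobolevNorm l t (lowModes l Λ f) ≤ Λ ^ (t - s) * sobolevNorm l s f :=
  sobolevNorm_le_of_le (fun i => (hl i).le) hf (rpow_nonneg hΛ.le _)
    (sq_lowModes_mul_rpow_le hl hst)

theorem MemSobolev.highModes (hl : ∀ i, 0 < l i) (hΛ : 0 < Λ) (hts : t ≤ s)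
    (hf : MemSobolev l s f) : MemSobolev l t (highModes l Λ f) :=
  hf.of_le (fun i => (hl i).le) (sq_highModes_mul_rpow_le hl hΛ hts)

theorem sobolevNorm_highModes_le (hl : ∀ i, 0 < l i) (hΛ : 0 < Λ) (hts : t ≤ s)
    (hf : MemSobolev l s f) :
    sobolevNorm l t (highModes l Λ f) ≤ Λ ^ (t - s) * sobolevNorm l s f :=
  sobolevNorm_le_of_le (fun i => (hl i).le) hf (rpow_nonneg hΛ.le _)
    (sq_highModes_mul_rpow_le hl hΛ hts)

theorem lowModes_add_highModes : lowModes l Λ f + highModes l Λ f = f :=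
  Set.indicator_self_add_compl _ f

end Sobolev

theorem abs_le_of_spectral_cutoff {l : ℕ → ℝ} (hl : ∀ i, 1 ≤ l i)
    (B : (ℕ → ℝ) → (ℕ → ℝ) → ℝ)
    (hadd1 : ∀ φ₁ φ₂ ψ, B (φ₁ + φ₂) ψ = B φ₁ ψ + B φ₂ ψ)
    (hadd2 : ∀ φ ψ₁ ψ₂, B φ (ψ₁ + ψ₂) = B φ ψ₁ + B φ ψ₂)
    {s s₀ K Λ : ℝ} (hs : 0 ≤ s) (hss₀ : s ≤ s₀) (hK : 0 ≤ K) (hΛ : 0 < Λ)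
    (hL2 : ∀ φ ψ, MemSobolev l 0 φ → MemSobolev l 0 ψ →
      |B φ ψ| ≤ sobolevNorm l 0 φ * sobolevNorm l 0 ψ)
    (hmix : ∀ φ ψ, MemSobolev l s₀ φ → MemSobolev l s₀ ψ →
      |B φ ψ| ≤ K * sobolevNorm l s₀ φ * sobolevNorm l s₀ ψ)
    {φ ψ : ℕ → ℝ} (hφ : MemSobolev l s φ) (hψ : MemSobolev l s ψ) :
    |B φ ψ| ≤ (K * (Λ ^ (s₀ - s)) ^ 2 + 2 * Λ ^ (-s)) * sobolevNorm l s φ * sobolevNorm l s ψ := by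
  have hl₀ : ∀ i, 0 < l i := fun i => zero_lt_one.trans_le (hl i)
  have hsplit : B φ ψ = B (lowModes l Λ φ) (lowModes l Λ ψ) + B (highModes l Λ φ) (lowModes l Λ ψ)
      + B φ (highModes l Λ ψ) := by
    conv_lhs => rw [← lowModes_add_highModes (f := ψ) (l := l) (Λ := Λ)]
    rw [hadd2, ← hadd1, lowModes_add_highModes]
  have hL2_R : ∀ {f}, MemSobolev l s f →
      sobolevNorm l 0 (highModes l Λ f) ≤ Λ ^ (-s) * sobolevNorm l s f :=
    fun hf => by simpa using sobolevNorm_highModes_le hl₀ hΛ hs hf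
  have hL2_T : ∀ {f}, MemSobolev l s f → sobolevNorm l 0 (lowModes l Λ f) ≤ sobolevNorm l s f :=
    fun hf => by
      simpa using (sobolevNorm_anti hl hs (hf.lowModes hl₀ le_rfl)).trans
        (sobolevNorm_lowModes_le hl₀ hΛ le_rfl hf)
  have hL2_mem : ∀ {f}, MemSobolev l s f → MemSobolev l 0 f := memSobolev_anti hl hs
  have hΛs : 0 ≤ Λ ^ (-s) := rpow_nonneg hΛ.le _
  have hφ₀ : 0 ≤ sobolevNorm l s φ := sobolevNorm_nonneg
  have hTT : |B (lowModes l Λ φ) (lowModes l Λ ψ)|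
      ≤ K * (Λ ^ (s₀ - s) * sobolevNorm l s φ) * (Λ ^ (s₀ - s) * sobolevNorm l s ψ) := by
    refine (hmix _ _ (hφ.lowModes hl₀ hss₀) (hψ.lowModes hl₀ hss₀)).trans ?_
    gcongr
    exacts [sobolevNorm_nonneg, sobolevNorm_lowModes_le hl₀ hΛ hss₀ hφ,
      sobolevNorm_lowModes_le hl₀ hΛ hss₀ hψ]
  have hRT : |B (highModes l Λ φ) (lowModes l Λ ψ)|
      ≤ Λ ^ (-s) * sobolevNorm l s φ * sobolevNorm l s ψ := by
    refine (hL2 _ _ (hφ.highModes hl₀ hΛ hs) (hL2_mem (hψ.lowModes hl₀ le_rfl))).trans ?_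
    exact mul_le_mul (hL2_R hφ) (hL2_T hψ) sobolevNorm_nonneg (by positivity)
  have hR : |B φ (highModes l Λ ψ)| ≤ Λ ^ (-s) * sobolevNorm l s φ * sobolevNorm l s ψ := by
    refine (hL2 _ _ (hL2_mem hφ) (hψ.highModes hl₀ hΛ hs)).trans ?_
    exact (mul_le_mul (sobolevNorm_anti hl hs hφ) (hL2_R hψ) sobolevNorm_nonneg hφ₀).trans_eq
      (by ring)
  calc |B φ ψ| ≤ |B (lowModes l Λ φ) (lowModes l Λ ψ)| + |B (highModes l Λ φ) (lowModes l Λ ψ)|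
        + |B φ (highModes l Λ ψ)| := hsplit ▸ abs_add_three _ _ _
    _ ≤ _ := by linarith

theorem stmt2_general (l : ℕ → ℝ) (hl : ∀ i, 1 ≤ l i)
    (ρ : ℕ → (ℕ → ℝ) → (ℕ → ℝ) → ℝ)
    (hadd1 : ∀ n φ₁ φ₂ ψ, ρ n (φ₁ + φ₂) ψ = ρ n φ₁ ψ + ρ n φ₂ ψ)
    (hadd2 : ∀ n φ ψ₁ ψ₂, ρ n φ (ψ₁ + ψ₂) = ρ n φ ψ₁ + ρ n φ ψ₂)
    (s s₀ α Cω : ℝ) (hs : 0 < s) (hss0 : s < s₀) (hCω : 0 ≤ Cω)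
    (hL2 : ∀ (n : ℕ) (φ ψ : ℕ → ℝ), Summable (fun i => (φ i) ^ 2) →
      Summable (fun i => (ψ i) ^ 2) →
      |ρ n φ ψ| ≤ Real.sqrt (∑' i, (φ i) ^ 2) * Real.sqrt (∑' i, (ψ i) ^ 2))
    (hmix : ∀ (n : ℕ) (φ ψ : ℕ → ℝ), Summable (fun i => (φ i) ^ 2 * l i ^ (2 * s₀)) →
      Summable (fun i => (ψ i) ^ 2 * l i ^ (2 * s₀)) →
      |ρ n φ ψ| ≤ Cω * Real.exp (-α * n) *
        Real.sqrt (∑' i, (φ i) ^ 2 * l i ^ (2 * s₀)) *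
        Real.sqrt (∑' i, (ψ i) ^ 2 * l i ^ (2 * s₀))) :
    ∀ (n : ℕ) (φ ψ : ℕ → ℝ), Summable (fun i => (φ i) ^ 2 * l i ^ (2 * s)) →
      Summable (fun i => (ψ i) ^ 2 * l i ^ (2 * s)) →
      |ρ n φ ψ| ≤ (Cω + 3) * Real.exp (-(α / (2 * (s₀ / s) - 1)) * n) *
        Real.sqrt (∑' i, (φ i) ^ 2 * l i ^ (2 * s)) *
        Real.sqrt (∑' i, (ψ i) ^ 2 * l i ^ (2 * s)) := by
  intro n φ ψ hφ hψ
  set β := α / (2 * (s₀ / s) - 1)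
  have hβ : β * (2 * (s₀ / s) - 1) = α :=
    div_mul_cancel₀ α (by linarith [(one_lt_div hs).2 hss0])
  have hΛs : exp (β * n / s) ^ (-s) = exp (-β * n) := by
    rw [← exp_mul]
    congr 1
    field_simp
  have hΛs₀ : exp (-α * n) * (exp (β * n / s) ^ (s₀ - s)) ^ 2 = exp (-β * n) := by
    rw [← exp_mul, ← exp_nat_mul, ← exp_add, ← hβ]
    congr 1
    field_simp
    ring
  have hcut := abs_le_of_spectral_cutoff hl (ρ n) (hadd1 n) (hadd2 n) hs.le hss0.le
    (K := Cω * exp (-α * n)) (by positivity) (exp_pos (β * n / s))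
    (fun φ ψ hφ hψ => by
      simpa only [sobolevNorm_zero] using
        hL2 n φ ψ (memSobolev_zero_iff.1 hφ) (memSobolev_zero_iff.1 hψ))
    (hmix n) hφ hψ
  rw [mul_assoc Cω, hΛs₀, hΛs] at hcut
  have hφ₀ : 0 ≤ sobolevNorm l s φ := sobolevNorm_nonneg
  have hψ₀ : 0 ≤ sobolevNorm l s ψ := sobolevNorm_nonneg
  calc |ρ n φ ψ| ≤ (Cω + 2) * exp (-β * n) * sobolevNorm l s φ * sobolevNorm l s ψ := by
        linarith
    _ ≤ (Cω + 3) * exp (-β * n) * sobolevNorm l s φ * sobolevNorm l s ψ := by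
        gcongr
        norm_num

/-- Interpolation of quenched exponential mixing: if the bilinear correlations `ρ n`
are bounded by the `L²` norms and decay exponentially with rate `α` against `H^{s₀}`
norms with prefactor `C_ω`, then they decay with rate `β = α/(2(s₀/s) - 1)` against
`H^s` norms with prefactor `C_ω + 3`, for any `0 < s < s₀`.
Sobolev norms are defined spectrally from eigenvalues `l i ≥ 1`. -/
theorem stmt2 (l : ℕ → ℝ) (hl : ∀ i, 1 ≤ l i)
    (ρ : ℕ → (ℕ → ℝ) → (ℕ → ℝ) → ℝ)
    (hadd1 : ∀ n φ₁ φ₂ ψ, ρ n (φ₁ + φ₂) ψ = ρ n φ₁ ψ + ρ n φ₂ ψ)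
    (hadd2 : ∀ n φ ψ₁ ψ₂, ρ n φ (ψ₁ + ψ₂) = ρ n φ ψ₁ + ρ n φ ψ₂)
    (s s₀ α Cω : ℝ) (hs : 0 < s) (hss0 : s < s₀) (hα : 0 < α) (hCω : 0 ≤ Cω)
    (hL2 : ∀ (n : ℕ) (φ ψ : ℕ → ℝ), Summable (fun i => (φ i) ^ 2) →
      Summable (fun i => (ψ i) ^ 2) →
      |ρ n φ ψ| ≤ Real.sqrt (∑' i, (φ i) ^ 2) * Real.sqrt (∑' i, (ψ i) ^ 2))
    (hmix : ∀ (n : ℕ) (φ ψ : ℕ → ℝ), Summable (fun i => (φ i) ^ 2 * l i ^ (2 * s₀)) →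
      Summable (fun i => (ψ i) ^ 2 * l i ^ (2 * s₀)) →
      |ρ n φ ψ| ≤ Cω * Real.exp (-α * n) *
        Real.sqrt (∑' i, (φ i) ^ 2 * l i ^ (2 * s₀)) *
        Real.sqrt (∑' i, (ψ i) ^ 2 * l i ^ (2 * s₀))) :
    ∀ (n : ℕ) (φ ψ : ℕ → ℝ), Summable (fun i => (φ i) ^ 2 * l i ^ (2 * s)) →
      Summable (fun i => (ψ i) ^ 2 * l i ^ (2 * s)) →
      |ρ n φ ψ| ≤ (Cω + 3) * Real.exp (-(α / (2 * (s₀ / s) - 1)) * n) *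
        Real.sqrt (∑' i, (φ i) ^ 2 * l i ^ (2 * s)) *
        Real.sqrt (∑' i, (ψ i) ^ 2 * l i ^ (2 * s)) :=
  stmt2_general l hl ρ hadd1 hadd2 s s₀ α Cω hs hss0 hCω hL2 hmix
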